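/- Let θᵢ = e^{(lᵢ − lⱼ − lₖ)/2}, xᵢ = (θⱼ+θₖ−θᵢ)/2, and uᵢ = ∫₀^{lᵢ} e^{−h e^{−t}} dt for a fixed h ∈ ℝ. Then the 3×3 matrix H = [∂μ(xᵢ)/∂uⱼ], where μ(x) = ∫₀^{x} e^{h t²} dt, is symmetric. -/

import Mathlib

/-- The generalized angle opposite the `i`-th edge: `θᵢ = exp((lᵢ - lⱼ - lₖ)/2)`. -/
noncomputable def thetaF (l : Fin 3 → ℝ) (i : Fin 3) : ℝ :=
  Real.exp (l i - (l 0 + l 1 + l 2) / 2)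

/-- The x-invariant `xᵢ = (θⱼ + θₖ - θᵢ)/2`. -/
noncomputable def xF (l : Fin 3 → ℝ) (i : Fin 3) : ℝ :=
  (thetaF l 0 + thetaF l 1 + thetaF l 2) / 2 - thetaF l i

/-- `μ(x) = ∫₀ˣ e^{h t²} dt`. -/
noncomputable def mu (h x : ℝ) : ℝ := ∫ t in (0:ℝ)..x, Real.exp (h * t ^ 2)

/-- The matrix `H = [∂μ(xᵢ)/∂uⱼ]` expressed via the chain rule, using
`duⱼ/dlⱼ = e^{-h e^{-lⱼ}}`. -/
noncomputable def Hmat (h : ℝ) (l : Fin 3 → ℝ) (i j : Fin 3) : ℝ :=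
  deriv (fun s => mu h (xF (Function.update l j s) i)) (l j) /
    Real.exp (-h * Real.exp (-l j))

/-!
By the chain rule, `Hᵢⱼ = (∂xᵢ/∂lⱼ) · exp (h (xᵢ² + e^{-lⱼ}))`. For `i ≠ j` both factors are
symmetric in `i, j`: `∂xᵢ/∂lⱼ = (θᵢ + θⱼ)/2 - (θ₀ + θ₁ + θ₂)/4`, and, with `k` the third index,
`xᵢ + xⱼ = θₖ`, `xᵢ - xⱼ = θⱼ - θᵢ` and `e^{-lᵢ} = θⱼ θₖ`, so that
`xᵢ² - xⱼ² = θₖ θⱼ - θₖ θᵢ = e^{-lᵢ} - e^{-lⱼ}`.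
-/

open Real Function

theorem mu_hasDerivAt (h x : ℝ) : HasDerivAt (mu h) (exp (h * x ^ 2)) x :=
  ((by fun_prop : Continuous fun t : ℝ => exp (h * t ^ 2)).integral_hasStrictDerivAt 0 x).hasDerivAt

theorem hasDerivAt_thetaF_update (l : Fin 3 → ℝ) (j m : Fin 3) :
    HasDerivAt (fun s => thetaF (update l j s) m)
      (thetaF l m * (Pi.single (M := fun _ => ℝ) j 1 m - 1 / 2)) (l j) := by
  have hu := hasDerivAt_pi.1 (hasDerivAt_update l j (l j))
  have key := ((hu m).fun_sub ((((hu 0).fun_add (hu 1)).fun_add (hu 2)).div_const 2)).exp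
  simp only [update_eq_self] at key
  unfold thetaF
  convert key using 2
  fin_cases j <;> simp

theorem hasDerivAt_xF_update_of_ne (l : Fin 3 → ℝ) {i j : Fin 3} (hij : i ≠ j) :
    HasDerivAt (fun s => xF (update l j s) i)
      ((thetaF l i + thetaF l j) / 2 - (thetaF l 0 + thetaF l 1 + thetaF l 2) / 4) (l j) := by
  have hθ := hasDerivAt_thetaF_update l j
  unfold xF
  refine (((((hθ 0).fun_add (hθ 1)).fun_add (hθ 2)).div_const 2).fun_sub (hθ i)).congr_deriv ?_
  fin_cases i <;> fin_cases j <;>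
    simp only [Fin.zero_eta, Fin.mk_one, Fin.reduceFinMk, Fin.isValue, ne_eq, not_true_eq_false,
      one_ne_zero, zero_ne_one, Fin.reduceEq, not_false_eq_true, Pi.single_eq_same,
      Pi.single_eq_of_ne, one_div, zero_sub, mul_neg, sub_neg_eq_add] at hij ⊢ <;>
    ring

theorem exp_neg_eq_thetaF_mul (l : Fin 3 → ℝ) (i : Fin 3) :
    exp (-l i) = thetaF l (i + 1) * thetaF l (i + 2) := by
  rw [thetaF, thetaF, ← exp_add]
  congr 1
  fin_cases i <;>
    simp only [Fin.zero_eta, Fin.mk_one, Fin.reduceFinMk, Fin.isValue, Fin.reduceAdd, zero_add] <;>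
    ring

theorem xF_sq_add_exp_neg_comm (l : Fin 3 → ℝ) (i j : Fin 3) :
    xF l i ^ 2 + exp (-l j) = xF l j ^ 2 + exp (-l i) := by
  fin_cases i <;> fin_cases j <;>
    simp only [xF, exp_neg_eq_thetaF_mul, Fin.zero_eta, Fin.mk_one, Fin.reduceFinMk, Fin.isValue,
      Fin.reduceAdd, zero_add] <;>
    ring

theorem Hmat_eq_of_hasDerivAt {h : ℝ} {l : Fin 3 → ℝ} {i j : Fin 3} {D : ℝ}
    (hD : HasDerivAt (fun s => xF (update l j s) i) D (l j)) :
    Hmat h l i j = D * exp (h * (xF l i ^ 2 + exp (-l j))) := by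
  have hcomp := (mu_hasDerivAt h (xF (update l j (l j)) i)).comp (l j) hD
  rw [update_eq_self] at hcomp
  have hderiv : deriv (fun s => mu h (xF (update l j s) i)) (l j) = exp (h * xF l i ^ 2) * D :=
    hcomp.deriv
  rw [Hmat, hderiv, mul_add, exp_add, neg_mul, exp_neg, div_inv_eq_mul]
  ring

theorem stmt9 (h : ℝ) (l : Fin 3 → ℝ) (i j : Fin 3) :
    Hmat h l i j = Hmat h l j i := by
  rcases eq_or_ne i j with rfl | hij
  · rfl
  rw [Hmat_eq_of_hasDerivAt (hasDerivAt_xF_update_of_ne l hij),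
    Hmat_eq_of_hasDerivAt (hasDerivAt_xF_update_of_ne l hij.symm), xF_sq_add_exp_neg_comm l i j,
    add_comm (thetaF l j)]
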